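/- Let R be a commutative reduced ring with exactly two minimal prime ideals P1 and P2. Then P1 ∩ P2 = (0), and for any two distinct nonzero annihilating-ideals I and J of R, there is a path of length at most 2 between I and J in the annihilating-ideal graph of R. -/

import Mathlib

/-!
In a reduced ring the minimal primes intersect in the nilradical, which is zero, so
`P₁ * P₂ ≤ P₁ ⊓ P₂ = 0`. An ideal `I` with a nonzero annihilator lies in `P₁` or in `P₂`:
`Ann(I) * I = 0` lies in both primes, and `Ann(I)` cannot lie in `P₁ ⊓ P₂ = 0`.
Two annihilating-ideals in different `Pᵢ` are therefore adjacent, and two in the same `Pᵢ`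
are both killed by the other prime, which is nonzero because distinct minimal primes cannot
contain each other.
-/

namespace Ideal

variable {R : Type*} [CommSemiring R]

theorem inf_eq_bot_of_minimalPrimes_eq_pair [IsReduced R] {P₁ P₂ : Ideal R}
    (hmin : minimalPrimes R = {P₁, P₂}) : P₁ ⊓ P₂ = ⊥ := by
  rw [← sInf_pair, ← hmin, minimalPrimes, sInf_minimalPrimes]
  exact nilradical_eq_zero R

theorem ne_bot_of_mem_minimalPrimes_of_ne {P Q : Ideal R} (hP : P ∈ minimalPrimes R)
    (hQ : Q ∈ minimalPrimes R) (hne : P ≠ Q) : Q ≠ ⊥ := by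
  rintro rfl
  exact hne (le_bot_iff.mp (hP.2 hQ.1 bot_le))

theorem le_or_le_of_annihilator_ne_bot {P₁ P₂ I : Ideal R} [P₁.IsPrime] [P₂.IsPrime]
    (h : P₁ ⊓ P₂ = ⊥) (hI : Submodule.annihilator I ≠ ⊥) : I ≤ P₁ ∨ I ≤ P₂ := by
  have hmul_le : ∀ P : Ideal R, P.IsPrime → Submodule.annihilator I ≤ P ∨ I ≤ P :=
    fun P hP => hP.mul_le.mp (Submodule.annihilator_mul I ▸ bot_le)
  by_contra! hnot
  have h₁ := (hmul_le P₁ inferInstance).resolve_right hnot.1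
  have h₂ := (hmul_le P₂ inferInstance).resolve_right hnot.2
  exact hI (le_bot_iff.mp (h ▸ le_inf h₁ h₂))

theorem mul_eq_bot_or_exists_of_le_or_le {P Q I J : Ideal R} (hPQ : P * Q = ⊥)
    (hP : P ≠ ⊥) (hQ : Q ≠ ⊥) (hI : I ≤ P ∨ I ≤ Q) (hJ : J ≤ P ∨ J ≤ Q) :
    I * J = ⊥ ∨ ∃ K : Ideal R, K ≠ ⊥ ∧ I * K = ⊥ ∧ J * K = ⊥ := by
  have hQP : Q * P = ⊥ := mul_comm P Q ▸ hPQ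
  have hP_mul : ∀ {A : Ideal R}, A ≤ P → A * Q = ⊥ :=
    fun h => le_bot_iff.mp (hPQ ▸ mul_le_mul_left h Q)
  have hQ_mul : ∀ {A : Ideal R}, A ≤ Q → A * P = ⊥ :=
    fun h => le_bot_iff.mp (hQP ▸ mul_le_mul_left h P)
  rcases hI with hI | hI <;> rcases hJ with hJ | hJ
  · exact .inr ⟨Q, hQ, hP_mul hI, hP_mul hJ⟩
  · exact .inl (le_bot_iff.mp (hPQ ▸ mul_le_mul' hI hJ))
  · exact .inl (le_bot_iff.mp (hQP ▸ mul_le_mul' hI hJ))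
  · exact .inr ⟨P, hP, hQ_mul hI, hQ_mul hJ⟩

end Ideal

theorem reduced_two_minimal_primes_diam_le_two {R : Type*} [CommRing R] [IsReduced R]
    (P₁ P₂ : Ideal R) (hne : P₁ ≠ P₂) (hmin : minimalPrimes R = {P₁, P₂}) :
    P₁ ⊓ P₂ = ⊥ ∧
      ∀ I J : Ideal R, I ≠ ⊥ → J ≠ ⊥ → Submodule.annihilator I ≠ ⊥ →
        Submodule.annihilator J ≠ ⊥ → I ≠ J →
        (I * J = ⊥ ∨ ∃ K : Ideal R, K ≠ ⊥ ∧ I * K = ⊥ ∧ J * K = ⊥) := by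
  have h₁ : P₁ ∈ minimalPrimes R := hmin ▸ Set.mem_insert P₁ {P₂}
  have h₂ : P₂ ∈ minimalPrimes R := hmin ▸ Set.mem_insert_of_mem P₁ rfl
  have : P₁.IsPrime := h₁.1.1
  have : P₂.IsPrime := h₂.1.1
  have hinf := Ideal.inf_eq_bot_of_minimalPrimes_eq_pair hmin
  have hmul : P₁ * P₂ = ⊥ := le_bot_iff.mp (hinf ▸ Ideal.mul_le_inf)
  have hP₁ := Ideal.ne_bot_of_mem_minimalPrimes_of_ne h₂ h₁ hne.symm
  have hP₂ := Ideal.ne_bot_of_mem_minimalPrimes_of_ne h₁ h₂ hne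
  refine ⟨hinf, fun I J _ _ hI hJ _ => ?_⟩
  exact Ideal.mul_eq_bot_or_exists_of_le_or_le hmul hP₁ hP₂
    (Ideal.le_or_le_of_annihilator_ne_bot hinf hI) (Ideal.le_or_le_of_annihilator_ne_bot hinf hJ)
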